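/- arXiv:1912.00231 — 2 statements merged into one kernel-verified Lean document; each statement's English description precedes it below -/
import Mathlib

section
/- As s → 0⁺, S⁺(x, x+sz) = s·E(x)·(z·F(z) + E(z)) + o(s). -/
open MeasureTheory ProbabilityTheory Asymptotics Filter
open Real Set Topology

noncomputable def gaussE (u : ℝ) : ℝ := (Real.sqrt (2 * Real.pi))⁻¹ * Real.exp (-u ^ 2 / 2)

noncomputable def gaussF (u : ℝ) : ℝ := ∫ z in Set.Iic u, gaussE z

lemma gaussE_eq (u : ℝ) : gaussE u = gaussianPDFReal 0 1 u := by
  simp [gaussE, gaussianPDFReal, neg_div]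

lemma gaussE_eq' : gaussE = gaussianPDFReal 0 1 := funext gaussE_eq

lemma gaussE_nonneg (u : ℝ) : 0 ≤ gaussE u := by
  rw [gaussE_eq]; exact gaussianPDFReal_nonneg 0 1 u

lemma gaussE_continuous : Continuous gaussE := by
  apply Continuous.mul continuous_const
  exact Real.continuous_exp.comp (by continuity)

lemma gaussE_integrable : Integrable gaussE := by
  rw [gaussE_eq']; exact integrable_gaussianPDFReal 0 1

lemma gaussE_integral : ∫ u, gaussE u = 1 := by
  rw [gaussE_eq']; exact integral_gaussianPDFReal_eq_one 0 one_ne_zero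

lemma gaussE_le (u : ℝ) : gaussE u ≤ (Real.sqrt (2 * Real.pi))⁻¹ := by
  have h1 : Real.exp (-u ^ 2 / 2) ≤ 1 := by
    rw [Real.exp_le_one_iff]
    nlinarith [sq_nonneg u]
  have h2 : (0:ℝ) ≤ (Real.sqrt (2 * Real.pi))⁻¹ := by positivity
  calc gaussE u ≤ (Real.sqrt (2 * Real.pi))⁻¹ * 1 := mul_le_mul_of_nonneg_left h1 h2
  _ = _ := mul_one _

lemma gaussE_hasDerivAt (u : ℝ) : HasDerivAt gaussE (-u * gaussE u) u := by
  have h : HasDerivAt (fun u : ℝ => -u ^ 2 / 2) (-u) u := by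
    have := ((hasDerivAt_pow 2 u).neg).div_const 2
    simpa using this.congr_deriv (by ring)
  have := (h.exp).const_mul (Real.sqrt (2 * Real.pi))⁻¹
  have h2 : HasDerivAt gaussE ((Real.sqrt (2 * Real.pi))⁻¹ * (Real.exp (-u ^ 2 / 2) * -u)) u := by
    unfold gaussE; exact this
  exact h2.congr_deriv (by unfold gaussE; ring)

lemma gaussF_nonneg (t : ℝ) : 0 ≤ gaussF t :=
  setIntegral_nonneg measurableSet_Iic fun u _ => gaussE_nonneg u

lemma gaussF_hasDerivAt (t : ℝ) : HasDerivAt gaussF (gaussE t) t := by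
  have key : ∀ b : ℝ, gaussF b = gaussF 0 + ∫ u in (0:ℝ)..b, gaussE u := by
    intro b
    have := intervalIntegral.integral_Iic_sub_Iic (μ := volume) (f := gaussE)
      gaussE_integrable.integrableOn gaussE_integrable.integrableOn (a := 0) (b := b)
    unfold gaussF; linarith
  have h : HasDerivAt (fun b => gaussF 0 + ∫ u in (0:ℝ)..b, gaussE u) (gaussE t) t := by
    apply HasDerivAt.const_add
    exact intervalIntegral.integral_hasDerivAt_right
      (gaussE_integrable.intervalIntegrable)
      (gaussE_continuous.stronglyMeasurable.stronglyMeasurableAtFilter)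
      gaussE_continuous.continuousAt
  exact h.congr_of_eventuallyEq (Filter.Eventually.of_forall fun b => key b)

lemma gaussF_continuous : Continuous gaussF :=
  continuous_iff_continuousAt.2 fun t => (gaussF_hasDerivAt t).continuousAt

lemma gaussF_mono : Monotone gaussF := by
  intro a b hab
  have := intervalIntegral.integral_Iic_sub_Iic (μ := volume) (f := gaussE)
    gaussE_integrable.integrableOn gaussE_integrable.integrableOn (a := a) (b := b)
  have h2 : 0 ≤ ∫ u in a..b, gaussE u :=
    intervalIntegral.integral_nonneg hab fun u _ => gaussE_nonneg u
  unfold gaussF; linarith [this]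

lemma gaussE_mul_exp (u : ℝ) : gaussE u * Real.exp (-u) = Real.exp (1/2) * gaussE (u + 1) := by
  unfold gaussE
  rw [mul_assoc, ← Real.exp_add,
    show (-u ^ 2 / 2 + -u) = 1/2 + (-(u+1) ^ 2 / 2) by ring, Real.exp_add]
  ring

lemma gaussF_le_exp (t : ℝ) : gaussF t ≤ Real.exp (t + 1/2) := by
  have hint : Integrable (fun u => gaussE u * Real.exp (t - u)) := by
    have : (fun u => gaussE u * Real.exp (t - u))
        = fun u => Real.exp t * (Real.exp (1/2) * gaussE (u + 1)) := by
      funext u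
      rw [Real.exp_sub, div_eq_mul_inv, ← Real.exp_neg, mul_left_comm, gaussE_mul_exp]
    rw [this]
    exact ((gaussE_integrable.comp_add_right 1).const_mul _).const_mul _
  have h1 : gaussF t ≤ ∫ u in Iic t, gaussE u * Real.exp (t - u) := by
    apply setIntegral_mono_on gaussE_integrable.integrableOn hint.integrableOn measurableSet_Iic
    intro u hu
    nth_rewrite 1 [← mul_one (gaussE u)]
    apply mul_le_mul_of_nonneg_left _ (gaussE_nonneg u)
    rw [Real.one_le_exp_iff]
    simp only [mem_Iic] at hu; linarith
  have h2 : ∫ u in Iic t, gaussE u * Real.exp (t - u) ≤ ∫ u, gaussE u * Real.exp (t - u) := by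
    apply setIntegral_le_integral hint
    filter_upwards with u
    exact mul_nonneg (gaussE_nonneg u) (Real.exp_nonneg _)
  have h3 : ∫ u, gaussE u * Real.exp (t - u) = Real.exp (t + 1/2) := by
    have : (fun u => gaussE u * Real.exp (t - u))
        = fun u => (Real.exp t * Real.exp (1/2)) * gaussE (u + 1) := by
      funext u
      rw [Real.exp_sub, div_eq_mul_inv, ← Real.exp_neg, mul_left_comm, gaussE_mul_exp, mul_assoc]
    rw [this, integral_const_mul]
    have : ∫ u, gaussE (u + 1) = 1 := by
      rw [integral_add_right_eq_self gaussE 1]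
      exact gaussE_integral
    rw [this, mul_one, Real.exp_add]
  linarith

lemma gaussF_le_one (t : ℝ) : gaussF t ≤ 1 := by
  rw [← gaussE_integral]
  exact setIntegral_le_integral gaussE_integrable
    (Filter.Eventually.of_forall fun u => gaussE_nonneg u)

lemma gaussF_tendsto_atBot : Tendsto gaussF atBot (𝓝 0) := by
  apply squeeze_zero_norm' (a := fun t => Real.exp (t + 1/2))
  · filter_upwards with t
    rw [Real.norm_eq_abs, abs_of_nonneg (gaussF_nonneg t)]
    exact gaussF_le_exp t
  · have : Tendsto (fun t : ℝ => t + 1/2) atBot atBot := tendsto_atBot_add_const_right _ _ tendsto_id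
    exact Real.tendsto_exp_atBot.comp this

lemma gaussE_le_exp (t : ℝ) : gaussE t ≤ Real.exp (t + 1/2) := by
  have hc : (Real.sqrt (2 * Real.pi))⁻¹ ≤ 1 := by
    rw [inv_le_one_iff₀]
    right
    rw [show (1:ℝ) = Real.sqrt 1 by simp]
    exact Real.sqrt_le_sqrt (by nlinarith [Real.pi_gt_three])
  have h2 : Real.exp (-t ^ 2 / 2) ≤ Real.exp (t + 1/2) := by
    rw [Real.exp_le_exp]; nlinarith [sq_nonneg (t+1)]
  calc gaussE t ≤ 1 * Real.exp (-t ^ 2 / 2) :=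
        mul_le_mul_of_nonneg_right hc (Real.exp_nonneg _)
    _ = Real.exp (-t ^ 2 / 2) := one_mul _
    _ ≤ _ := h2

lemma gaussE_tendsto_atBot : Tendsto gaussE atBot (𝓝 0) := by
  apply squeeze_zero_norm' (a := fun t => Real.exp (t + 1/2))
  · filter_upwards with t
    rw [Real.norm_eq_abs, abs_of_nonneg (gaussE_nonneg t)]
    exact gaussE_le_exp t
  · have : Tendsto (fun t : ℝ => t + 1/2) atBot atBot := tendsto_atBot_add_const_right _ _ tendsto_id
    exact Real.tendsto_exp_atBot.comp this

lemma mul_gaussF_tendsto_atBot : Tendsto (fun t => t * gaussF t) atBot (𝓝 0) := by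
  apply squeeze_zero_norm' (a := fun t => -t * Real.exp (t + 1/2))
  · filter_upwards [Filter.Iic_mem_atBot (0:ℝ)] with t ht
    rw [Real.norm_eq_abs, abs_mul, abs_of_nonneg (gaussF_nonneg t)]
    have h1 : |t| = -t := abs_of_nonpos ht
    rw [h1]
    exact mul_le_mul_of_nonneg_left (gaussF_le_exp t) (by linarith [ht.out])
  · have h0 : Tendsto (fun x : ℝ => Real.exp (1/2) * (x ^ 1 * Real.exp (-x))) atTop (𝓝 0) := by
      simpa using (tendsto_pow_mul_exp_neg_atTop_nhds_zero 1).const_mul (Real.exp (1/2))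
    have := h0.comp tendsto_neg_atBot_atTop
    apply this.congr
    intro t
    simp only [Function.comp, pow_one, neg_neg]
    rw [Real.exp_add]
    ring

lemma gaussF_integrableOn_Iic (z : ℝ) : IntegrableOn gaussF (Iic z) := by
  apply Integrable.mono (g := fun t => Real.exp (t + 1/2))
  · have heq : (fun t : ℝ => Real.exp (t + 1/2)) = fun t => Real.exp (1/2) * Real.exp t := by
      funext t; rw [Real.exp_add]; ring
    rw [heq]
    exact (integrableOn_exp_Iic z).const_mul _
  · exact (gaussF_continuous.aestronglyMeasurable).restrict
  · filter_upwards with t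
    rw [Real.norm_eq_abs, abs_of_nonneg (gaussF_nonneg t), Real.norm_eq_abs,
      abs_of_nonneg (Real.exp_nonneg _)]
    exact gaussF_le_exp t

lemma integral_gaussF_Iic (z : ℝ) :
    ∫ t in Iic z, gaussF t = z * gaussF z + gaussE z := by
  have hderiv : ∀ t : ℝ, HasDerivAt (fun t => t * gaussF t + gaussE t) (gaussF t) t := by
    intro t
    have h1 := (hasDerivAt_id t).mul (gaussF_hasDerivAt t)
    have h2 := h1.add (gaussE_hasDerivAt t)
    exact h2.congr_deriv (by simp only [id_eq]; ring)
  have hlim : Tendsto (fun t => t * gaussF t + gaussE t) atBot (𝓝 0) := by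
    simpa using mul_gaussF_tendsto_atBot.add gaussE_tendsto_atBot
  have := integral_Iic_of_hasDerivAt_of_tendsto' (fun t _ => hderiv t)
    (gaussF_integrableOn_Iic z) hlim
  rw [this]; ring

lemma gaussianReal_Iio (t : ℝ) :
    gaussianReal 0 1 (Iio t) = ENNReal.ofReal (gaussF t) := by
  rw [gaussianReal_apply_eq_integral 0 one_ne_zero (Iio t)]
  congr 1
  rw [← gaussE_eq']
  exact (integral_Iic_eq_integral_Iio).symm

lemma integral_Ioi_comp_add (f : ℝ → ℝ) (a c : ℝ) :
    ∫ w in Ioi a, f (w + c) = ∫ u in Ioi (a + c), f u := by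
  have A : MeasurableEmbedding (fun w : ℝ => w + c) :=
    (Homeomorph.addRight c).isClosedEmbedding.measurableEmbedding
  have h := A.setIntegral_map (μ := volume) f (Ioi (a + c))
  rw [map_add_right_eq_self volume c] at h
  have hpre : (fun w : ℝ => w + c) ⁻¹' Ioi (a + c) = Ioi a := by
    ext w; simp [mem_preimage, mem_Ioi]
  rw [hpre] at h
  exact h.symm

noncomputable def stdGauss2 : Measure (ℝ × ℝ) :=
  (gaussianReal 0 1).prod (gaussianReal 0 1)

/-- S⁺(x, x+sz) = P(X₁ > x, X₁ + s Z₁ < x + s z). -/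
noncomputable def Splus (s x z : ℝ) : ℝ :=
  (stdGauss2 {p : ℝ × ℝ | x < p.1 ∧ p.1 + s * p.2 < x + s * z}).toReal

lemma Splus_eq_integral {s : ℝ} (hs : 0 < s) (x z : ℝ) :
    Splus s x z = ∫ u in Ioi x, gaussE u * gaussF (z - (u - x)/s) := by
  set g : ℝ → ℝ := Set.indicator (Ioi x) (fun u => gaussF (z - (u - x)/s)) with hg
  have hgmeas : Measurable g :=
    (gaussF_continuous.measurable.comp (by measurability)).indicator measurableSet_Ioi
  have hgnonneg : ∀ u, 0 ≤ g u := fun u => by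
    rw [hg]
    exact Set.indicator_nonneg (fun u _ => gaussF_nonneg _) u
  have hS : MeasurableSet {p : ℝ × ℝ | x < p.1 ∧ p.1 + s * p.2 < x + s * z} := by
    apply MeasurableSet.inter
    · exact measurableSet_lt measurable_const measurable_fst
    · exact measurableSet_lt (measurable_fst.add (measurable_snd.const_mul s)) measurable_const
  have hslice : ∀ u : ℝ, gaussianReal 0 1
      (Prod.mk u ⁻¹' {p : ℝ × ℝ | x < p.1 ∧ p.1 + s * p.2 < x + s * z})
      = ENNReal.ofReal (g u) := by
    intro u
    by_cases hu : x < u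
    · have hset : Prod.mk u ⁻¹' {p : ℝ × ℝ | x < p.1 ∧ p.1 + s * p.2 < x + s * z}
          = Iio (z - (u - x)/s) := by
        ext w
        simp only [mem_preimage, mem_setOf_eq, mem_Iio, hu, true_and]
        rw [show z - (u - x)/s = (x + s * z - u)/s by field_simp; ring, lt_div_iff₀ hs]
        constructor <;> intro h <;> nlinarith
      rw [hset, gaussianReal_Iio, hg, Set.indicator_of_mem (mem_Ioi.mpr hu)]
    · have hset : Prod.mk u ⁻¹' {p : ℝ × ℝ | x < p.1 ∧ p.1 + s * p.2 < x + s * z} = ∅ := by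
        ext w; simp [mem_preimage, hu]
      rw [hset, hg, Set.indicator_of_notMem (by simpa [mem_Ioi] using hu)]
      simp
  have hprod : stdGauss2 {p : ℝ × ℝ | x < p.1 ∧ p.1 + s * p.2 < x + s * z}
      = ∫⁻ u, ENNReal.ofReal (g u) ∂(gaussianReal 0 1) := by
    rw [stdGauss2, Measure.prod_apply hS]
    exact lintegral_congr hslice
  have hwd : ∫⁻ u, ENNReal.ofReal (g u) ∂(gaussianReal 0 1)
      = ∫⁻ u, ENNReal.ofReal (gaussE u * g u) := by
    rw [gaussianReal_of_var_ne_zero 0 one_ne_zero,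
      lintegral_withDensity_eq_lintegral_mul volume (measurable_gaussianPDF 0 1)
        (hgmeas.ennreal_ofReal)]
    apply lintegral_congr
    intro u
    simp only [Pi.mul_apply, gaussianPDF, ← gaussE_eq]
    rw [ENNReal.ofReal_mul (gaussE_nonneg u)]
  have hint : ∫ u, gaussE u * g u
      = (∫⁻ u, ENNReal.ofReal (gaussE u * g u)).toReal := by
    rw [integral_eq_lintegral_of_nonneg_ae]
    · exact Filter.Eventually.of_forall fun u => mul_nonneg (gaussE_nonneg u) (hgnonneg u)
    · exact (gaussE_continuous.measurable.mul hgmeas).aestronglyMeasurable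
  have hfinal : ∫ u, gaussE u * g u = ∫ u in Ioi x, gaussE u * gaussF (z - (u - x)/s) := by
    rw [← integral_indicator measurableSet_Ioi]
    congr 1
    funext u
    rw [hg]
    by_cases hu : u ∈ Ioi x
    · rw [Set.indicator_of_mem hu, Set.indicator_of_mem hu]
    · rw [Set.indicator_of_notMem hu, Set.indicator_of_notMem hu, mul_zero]
  rw [Splus, hprod, hwd, ← hint, hfinal]

lemma Splus_eq_smul {s : ℝ} (hs : 0 < s) (x z : ℝ) :
    Splus s x z = s * ∫ v in Ioi 0, gaussE (x + s * v) * gaussF (z - v) := by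
  rw [Splus_eq_integral hs x z]
  set F : ℝ → ℝ := fun u => gaussE u * gaussF (z - (u - x)/s) with hF
  have h1 : ∫ u in Ioi x, F u = ∫ w in Ioi 0, F (w + x) := by
    rw [integral_Ioi_comp_add F 0 x, zero_add]
  have h2 : ∫ v in Ioi 0, F (s * v + x) = s⁻¹ • ∫ w in Ioi 0, F (w + x) := by
    have := integral_comp_mul_left_Ioi (fun w => F (w + x)) 0 hs
    rw [mul_zero] at this
    exact this
  have h3 : ∀ v : ℝ, F (s * v + x) = gaussE (x + s * v) * gaussF (z - v) := by
    intro v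
    rw [hF]
    simp only
    rw [show s * v + x - x = s * v by ring, mul_div_cancel_left₀ _ hs.ne', add_comm (s*v) x]
  have h4 : ∫ v in Ioi 0, gaussE (x + s * v) * gaussF (z - v) = ∫ v in Ioi 0, F (s * v + x) :=
    setIntegral_congr_fun measurableSet_Ioi (fun v _ => (h3 v).symm)
  rw [h4, h2, h1, smul_eq_mul, ← mul_assoc, mul_inv_cancel₀ hs.ne', one_mul]

lemma integral_Iic_comp_add (f : ℝ → ℝ) (a c : ℝ) :
    ∫ w in Iic a, f (w + c) = ∫ u in Iic (a + c), f u := by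
  have A : MeasurableEmbedding (fun w : ℝ => w + c) :=
    (Homeomorph.addRight c).isClosedEmbedding.measurableEmbedding
  have h := A.setIntegral_map (μ := volume) f (Iic (a + c))
  rw [map_add_right_eq_self volume c] at h
  have hpre : (fun w : ℝ => w + c) ⁻¹' Iic (a + c) = Iic a := by
    ext w; simp [mem_preimage, mem_Iic]
  rw [hpre] at h
  exact h.symm

lemma T_eq (z : ℝ) : ∫ v in Ioi (0:ℝ), gaussF (z - v) = z * gaussF z + gaussE z := by
  have h1 : ∫ v in Ioi (0:ℝ), gaussF (z - v) = ∫ t in Iic (0:ℝ), gaussF (z + t) := by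
    have := integral_comp_neg_Ioi (0:ℝ) (fun t => gaussF (z + t))
    rw [neg_zero] at this
    rw [← this]
    apply setIntegral_congr_fun measurableSet_Ioi
    intro v _
    show gaussF (z - v) = gaussF (z + -v)
    rw [sub_eq_add_neg]
  have h2 : ∫ t in Iic (0:ℝ), gaussF (z + t) = ∫ u in Iic z, gaussF u := by
    have := integral_Iic_comp_add gaussF 0 z
    rw [zero_add] at this
    rw [← this]
    apply setIntegral_congr_fun measurableSet_Iic
    intro t _
    show gaussF (z + t) = gaussF (t + z)
    rw [add_comm]
  rw [h1, h2, integral_gaussF_Iic]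

lemma gaussF_sub_integrableOn (z : ℝ) :
    IntegrableOn (fun v => gaussF (z - v)) (Ioi (0:ℝ)) := by
  apply Integrable.mono (g := fun v => Real.exp (z + 1/2) * Real.exp (-v))
  · have h := (exp_neg_integrableOn_Ioi 0 one_pos).const_mul (Real.exp (z + 1/2))
    apply h.congr
    filter_upwards with v
    rw [neg_one_mul]
  · exact ((gaussF_continuous.comp (continuous_const.sub continuous_id)).aestronglyMeasurable).restrict
  · filter_upwards with v
    rw [Real.norm_eq_abs, abs_of_nonneg (gaussF_nonneg _), Real.norm_eq_abs,
      abs_of_nonneg (by positivity)]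
    calc gaussF (z - v) ≤ Real.exp (z - v + 1/2) := gaussF_le_exp _
      _ = Real.exp (z + 1/2) * Real.exp (-v) := by rw [← Real.exp_add]; ring_nf

lemma tendsto_I (x z : ℝ) :
    Tendsto (fun s => ∫ v in Ioi (0:ℝ), gaussE (x + s * v) * gaussF (z - v))
      (nhdsWithin 0 (Set.Ioi 0)) (𝓝 (gaussE x * (z * gaussF z + gaussE z))) := by
  have hlim : ∫ v in Ioi (0:ℝ), gaussE x * gaussF (z - v)
      = gaussE x * (z * gaussF z + gaussE z) := by
    rw [integral_const_mul, T_eq]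
  rw [← hlim]
  apply tendsto_integral_filter_of_dominated_convergence
    (bound := fun v => (Real.sqrt (2 * Real.pi))⁻¹ * gaussF (z - v))
  · filter_upwards with s
    exact (((gaussE_continuous.comp (continuous_const.add (continuous_const.mul continuous_id))).mul
      (gaussF_continuous.comp (continuous_const.sub continuous_id))).aestronglyMeasurable).restrict
  · filter_upwards with s
    filter_upwards with v
    rw [Real.norm_eq_abs, abs_mul, abs_of_nonneg (gaussE_nonneg _),
      abs_of_nonneg (gaussF_nonneg _)]
    exact mul_le_mul_of_nonneg_right (gaussE_le _) (gaussF_nonneg _)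
  · exact (gaussF_sub_integrableOn z).const_mul _
  · filter_upwards with v
    have hc : Continuous (fun s : ℝ => gaussE (x + s * v)) :=
      gaussE_continuous.comp (continuous_const.add (continuous_id.mul continuous_const))
    have h0 := (hc.tendsto 0).mono_left (nhdsWithin_le_nhds (s := Set.Ioi (0:ℝ)))
    rw [show x + (0:ℝ) * v = x by ring] at h0
    exact h0.mul_const _

theorem stmt_4 (x z : ℝ) :
    (fun s : ℝ => Splus s x z - s * (gaussE x * (z * gaussF z + gaussE z)))
      =o[nhdsWithin 0 (Set.Ioi 0)] (fun s : ℝ => s) := by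
  rw [isLittleO_iff]
  intro ε hε
  have h1 := Metric.tendsto_nhds.mp (tendsto_I x z) ε hε
  filter_upwards [h1, self_mem_nhdsWithin] with s hs1 hs2
  have hs : (0:ℝ) < s := hs2
  rw [Splus_eq_smul hs x z]
  rw [Real.dist_eq] at hs1
  rw [← mul_sub, Real.norm_eq_abs, Real.norm_eq_abs, abs_mul, abs_of_pos hs]
  nlinarith [hs1, hs]
end

section
/- If a_N and b_N are sequences of nonnegative reals with a_N·N → a and b_N·N → b for constants a, b ≥ 0, and (K_N, L_N) is multinomially distributed counting N−1 independent trials with success probabilities a_N (for type +) and b_N (for type −), then P(K_N = L_N) converges to e^{−(a+b)}·Σ_{k≥0} a^k b^k/(k!)², i.e. the probability that two independent Poisson variables with means a and b are equal. -/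
/-!
Split `P(K_N = L_N)` according to the common value `k`. For fixed `k` the `k`-th term
`C(N-1, k) a_N^k · C(N-1-k, k) b_N^k · (1 - a_N - b_N)^(N-1-2k)` converges, factor by factor as
in the Poisson limit theorem, to `(a^k/k!) (b^k/k!) e^{-(a+b)}`. With `A`, `B` bounds for
`N a_N`, `N b_N`, every term is at most `(AB)^k/k!`, so Tannery's theorem (dominated
convergence for series) lets the limit pass through the sum.
-/

open Filter Topology ProbabilityTheory

/-- P(K_N = L_N) where (K_N, L_N, N-1-K_N-L_N) ~ Multinomial(N-1; a, b, 1-a-b):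
the probability that the two counts are equal. -/
noncomputable def probEqualCounts (N : ℕ) (a b : ℝ) : ℝ :=
  ∑ k ∈ Finset.range ((N - 1) / 2 + 1),
    ((N - 1).choose k : ℝ) * ((N - 1 - k).choose k : ℝ) * a ^ k * b ^ k *
      (1 - a - b) ^ (N - 1 - 2 * k)

/-- `P(K_N = L_N = k)`. -/
noncomputable def probEqualCountsAt (N : ℕ) (a b : ℝ) (k : ℕ) : ℝ :=
  ((N - 1).choose k : ℝ) * ((N - 1 - k).choose k : ℝ) * a ^ k * b ^ k *
    (1 - a - b) ^ (N - 1 - 2 * k)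

/-- For `2 * k > N - 1` the coefficient `(N - 1 - k).choose k` vanishes, so the truncated
exponent `N - 1 - 2 * k` never matters. -/
lemma probEqualCounts_eq_tsum (N : ℕ) (a b : ℝ) :
    probEqualCounts N a b = ∑' k, probEqualCountsAt N a b k := by
  refine (tsum_eq_sum fun k hk => ?_).symm
  rw [Finset.mem_range, not_lt] at hk
  simp [Nat.choose_eq_zero_of_lt (by omega : N - 1 - k < k)]

section PoissonLimit

variable {p : ℕ → ℝ} {r : ℝ}

lemma tendsto_natCast_mul_comp_add (hr : Tendsto (fun n : ℕ => n * p n) atTop (𝓝 r))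
    (j : ℕ) :
    Tendsto (fun n : ℕ => n * p (n + j)) atTop (𝓝 r) := by
  have hshift := (tendsto_add_atTop_iff_nat j).2 hr
  have hzero := (tendsto_add_atTop_iff_nat j).2 (tendsto_zero_of_tendsto_mul_atTop hr)
  simpa using (hshift.sub (hzero.const_mul (j : ℝ))).congr fun n => by push_cast; ring

lemma tendsto_choose_sub_mul_pow (hr : Tendsto (fun n : ℕ => n * p n) atTop (𝓝 r))
    (j k : ℕ) :
    Tendsto (fun n => ((n - j).choose k : ℝ) * p n ^ k) atTop (𝓝 (r ^ k / k.factorial)) := by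
  rw [← tendsto_add_atTop_iff_nat j]
  simpa only [Nat.add_sub_cancel] using
    tendsto_choose_mul_pow_atTop k (tendsto_natCast_mul_comp_add hr j)

lemma tendsto_one_sub_pow_sub (hr : Tendsto (fun n : ℕ => n * p n) atTop (𝓝 r)) (d : ℕ) :
    Tendsto (fun n => (1 - p n) ^ (n - d)) atTop (𝓝 (Real.exp (-r))) := by
  rw [← tendsto_add_atTop_iff_nat d]
  simpa only [Nat.add_sub_cancel, ← sub_eq_add_neg] using
    Real.tendsto_one_add_pow_exp_of_tendsto (g := fun n => -p (n + d))
      (by simpa only [mul_neg] using (tendsto_natCast_mul_comp_add hr d).neg)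

end PoissonLimit

lemma tendsto_probEqualCountsAt {p q : ℕ → ℝ} {a b : ℝ}
    (ha : Tendsto (fun n : ℕ => n * p n) atTop (𝓝 a))
    (hb : Tendsto (fun n : ℕ => n * q n) atTop (𝓝 b)) (k : ℕ) :
    Tendsto (fun n => probEqualCountsAt n (p n) (q n) k) atTop
      (𝓝 (Real.exp (-(a + b)) * (a ^ k * b ^ k / (k.factorial : ℝ) ^ 2))) := by
  have hsum : Tendsto (fun n : ℕ => n * (p n + q n)) atTop (𝓝 (a + b)) := by
    simpa only [mul_add] using ha.add hb
  have hlim := ((tendsto_choose_sub_mul_pow ha 1 k).mul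
    (tendsto_choose_sub_mul_pow hb (1 + k) k)).mul (tendsto_one_sub_pow_sub hsum (1 + 2 * k))
  convert hlim using 2 with n
  · simp only [probEqualCountsAt, Nat.sub_sub]
    ring
  · ring

lemma choose_mul_pow_le {n m : ℕ} (hnm : n ≤ m) (k : ℕ) {c : ℝ} (hc : 0 ≤ c) :
    (n.choose k : ℝ) * c ^ k ≤ (m * c) ^ k / k.factorial := by
  calc (n.choose k : ℝ) * c ^ k ≤ (n : ℝ) ^ k / k.factorial * c ^ k := by
        gcongr; exact Nat.choose_le_pow_div k n
    _ ≤ (m : ℝ) ^ k / k.factorial * c ^ k := by gcongr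
    _ = (m * c) ^ k / k.factorial := by ring

section Bounds

variable {N : ℕ} {a b : ℝ} (ha : 0 ≤ a) (hb : 0 ≤ b) (hab : a + b ≤ 1)
include ha hb hab

lemma probEqualCountsAt_nonneg (k : ℕ) : 0 ≤ probEqualCountsAt N a b k := by
  unfold probEqualCountsAt
  have : 0 ≤ 1 - a - b := by linarith
  positivity

lemma probEqualCountsAt_le {A B : ℝ} (hA : N * a ≤ A) (hB : N * b ≤ B) (k : ℕ) :
    probEqualCountsAt N a b k ≤ (A * B) ^ k / k.factorial := by
  have hfac : (1 : ℝ) ≤ k.factorial := mod_cast k.factorial_pos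
  have hA0 : 0 ≤ A := (mul_nonneg N.cast_nonneg ha).trans hA
  have hB0 : 0 ≤ B := (mul_nonneg N.cast_nonneg hb).trans hB
  have hpa := choose_mul_pow_le (Nat.sub_le N 1) k ha
  have hpb := choose_mul_pow_le (by omega : N - 1 - k ≤ N) k hb
  have hrest : (1 - a - b) ^ (N - 1 - 2 * k) ≤ 1 := pow_le_one₀ (by linarith) (by linarith)
  calc probEqualCountsAt N a b k
      = ((N - 1).choose k * a ^ k) * ((N - 1 - k).choose k * b ^ k) *
          (1 - a - b) ^ (N - 1 - 2 * k) := by unfold probEqualCountsAt; ring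
    _ ≤ (N * a) ^ k / k.factorial * ((N * b) ^ k / k.factorial) * 1 := by
        gcongr ?_ * ?_ * ?_
        exact pow_nonneg (by linarith) _
    _ ≤ A ^ k / k.factorial * (B ^ k / k.factorial) * 1 := by gcongr
    _ = (A * B) ^ k / k.factorial / k.factorial := by ring
    _ ≤ (A * B) ^ k / k.factorial := div_le_self (by positivity) hfac

end Bounds

theorem stmt_11_general (a b : ℝ) (aN bN : ℕ → ℝ)
    (haN : ∀ N, 0 ≤ aN N) (hbN : ∀ N, 0 ≤ bN N) (hab : ∀ N, aN N + bN N ≤ 1)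
    (hla : Tendsto (fun N : ℕ => aN N * N) atTop (nhds a))
    (hlb : Tendsto (fun N : ℕ => bN N * N) atTop (nhds b)) :
    Tendsto (fun N : ℕ => probEqualCounts N (aN N) (bN N)) atTop
      (nhds (Real.exp (-(a + b)) * ∑' k : ℕ, a ^ k * b ^ k / (k.factorial : ℝ) ^ 2)) := by
  have hla' : Tendsto (fun N : ℕ => N * aN N) atTop (𝓝 a) := by simpa only [mul_comm] using hla
  have hlb' : Tendsto (fun N : ℕ => N * bN N) atTop (𝓝 b) := by simpa only [mul_comm] using hlb
  obtain ⟨A, hA⟩ := hla'.bddAbove_range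
  obtain ⟨B, hB⟩ := hlb'.bddAbove_range
  simp_rw [probEqualCounts_eq_tsum, ← tsum_mul_left]
  refine tendsto_tsum_of_dominated_convergence (Real.summable_pow_div_factorial (A * B))
    (tendsto_probEqualCountsAt hla' hlb') (Eventually.of_forall fun N k => ?_)
  rw [Real.norm_of_nonneg (probEqualCountsAt_nonneg (haN N) (hbN N) (hab N) k)]
  exact probEqualCountsAt_le (haN N) (hbN N) (hab N) (hA ⟨N, rfl⟩) (hB ⟨N, rfl⟩) k

theorem stmt_11 (a b : ℝ) (ha : 0 ≤ a) (hb : 0 ≤ b) (aN bN : ℕ → ℝ)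
    (haN : ∀ N, 0 ≤ aN N) (hbN : ∀ N, 0 ≤ bN N) (hab : ∀ N, aN N + bN N ≤ 1)
    (hla : Tendsto (fun N : ℕ => aN N * N) atTop (nhds a))
    (hlb : Tendsto (fun N : ℕ => bN N * N) atTop (nhds b)) :
    Tendsto (fun N : ℕ => probEqualCounts N (aN N) (bN N)) atTop
      (nhds (Real.exp (-(a + b)) * ∑' k : ℕ, a ^ k * b ^ k / (k.factorial : ℝ) ^ 2)) :=
  stmt_11_general a b aN bN haN hbN hab hla hlb
end
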